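/- arXiv:2504.14077 — 4 statements merged into one kernel-verified Lean document; each statement's English description precedes it below -/
import Mathlib

section
/- Let {P_θ : θ ∈ Θ ⊆ ℝ^k} be a parametric family of probability distributions on ℝ, θ₀ ∈ Θ, and for each n let Tₙ : ℝⁿ → ℝ be a measurable test statistic with CDF Gₙ(t|θ) = P_θⁿ(Tₙ ≤ t) under i.i.d. sampling from P_θ. Suppose there is a random variable T with continuous CDF G_T such that for every sequence θₙ ∈ Θ with √n‖θₙ − θ₀‖ bounded, Tₙ converges in distribution to T under P_{θₙ}ⁿ. Then for every c ∈ ℝ, sup_{θ ∈ Aₙ(c)} sup_{t ∈ ℝ} |Gₙ(t|θ) − G_T(t)| → 0 as n → ∞, where Aₙ(c) = {θ ∈ Θ : ‖θ − θ₀‖ ≤ c/√n}. In particular, Tₙ converges in distribution under P_{θ₀}ⁿ to T, and for every c ∈ ℝ, sup_{θ ∈ Aₙ(c)} sup_{t ∈ ℝ} |Gₙ(t|θ) − Gₙ(t|θ₀)| → 0. -/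
/-!
Under every `√n`-bounded sequence of parameters the sampling CDFs converge pointwise to the
continuous CDF `GT`, hence uniformly in `t` by Pólya's theorem: by monotonicity it suffices to
control finitely many points that bracket every `t` up to `ε`, and compactness provides them.
Uniformity over the shrinking neighborhoods then follows by contradiction: if it failed, choosing
a worst parameter in `Aₙ(c)` for each `n` would produce a `√n`-bounded sequence along which uniform convergence fails.
-/

open MeasureTheory Filter Topology Set

section Polya

variable {g : ℝ → ℝ} {L₀ L₁ : ℝ}

theorem Monotone.exists_finset_lower_bracket (hmono : Monotone g) (hcont : Continuous g)
    (hbot : Tendsto g atBot (𝓝 L₀)) (htop : Tendsto g atTop (𝓝 L₁)) {ε : ℝ} (hε : 0 < ε) :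
    ∃ s : Finset ℝ, ∀ t, g t < L₀ + ε ∨ ∃ a ∈ s, a ≤ t ∧ g t < g a + ε := by
  obtain ⟨a₀, ha₀⟩ : ∃ a₀, g a₀ < L₀ + ε :=
    (hbot.eventually (gt_mem_nhds (lt_add_of_pos_right L₀ hε))).exists
  obtain ⟨b₀, hb₀⟩ : ∃ b₀, L₁ - ε < g b₀ :=
    (htop.eventually (lt_mem_nhds (sub_lt_self L₁ hε))).exists
  have hcover : Icc a₀ b₀ ⊆ ⋃ a, Ioi a ∩ g ⁻¹' Iio (g a + ε) := by
    intro t _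
    obtain ⟨a, hat, ha⟩ : ∃ a < t, g t - ε < g a :=
      (hcont.continuousAt.eventually (lt_mem_nhds (sub_lt_self (g t) hε))).exists_lt
    exact mem_iUnion.2 ⟨a, hat, show g t < g a + ε by linarith⟩
  obtain ⟨s, hs⟩ := isCompact_Icc.elim_finite_subcover _
    (fun a => isOpen_Ioi.inter (isOpen_Iio.preimage hcont)) hcover
  refine ⟨insert b₀ s, fun t => ?_⟩
  rcases lt_or_ge t a₀ with hta | hta
  · exact Or.inl ((hmono hta.le).trans_lt ha₀)
  rcases le_or_gt t b₀ with htb | htb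
  · obtain ⟨a, hat, has, ha⟩ : ∃ a < t, a ∈ s ∧ g t < g a + ε := by simpa using hs ⟨hta, htb⟩
    exact Or.inr ⟨a, Finset.mem_insert_of_mem has, hat.le, ha⟩
  · exact Or.inr ⟨b₀, Finset.mem_insert_self _ _, htb.le, by linarith [hmono.ge_of_tendsto htop t]⟩

theorem eventually_forall_sub_lt_of_tendsto {ι : Type*} {l : Filter ι} {F : ι → ℝ → ℝ}
    (hF : ∀ i, Monotone (F i)) (hF₀ : ∀ i t, L₀ ≤ F i t) (hmono : Monotone g)
    (hcont : Continuous g) (hbot : Tendsto g atBot (𝓝 L₀)) (htop : Tendsto g atTop (𝓝 L₁))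
    (hconv : ∀ t, Tendsto (fun i => F i t) l (𝓝 (g t))) {ε : ℝ} (hε : 0 < ε) :
    ∀ᶠ i in l, ∀ t, g t - F i t < ε := by
  obtain ⟨s, hs⟩ := hmono.exists_finset_lower_bracket hcont hbot htop (half_pos hε)
  have hgrid : ∀ᶠ i in l, ∀ a ∈ s, g a - ε / 2 < F i a :=
    (eventually_all_finset s).2 fun a _ =>
      (hconv a).eventually (lt_mem_nhds (sub_lt_self (g a) (half_pos hε)))
  filter_upwards [hgrid] with i hi t
  rcases hs t with ht | ⟨a, has, hat, ha⟩
  · linarith [hF₀ i t]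
  · linarith [hF i hat, hi a has]

/-- Pólya's theorem. -/
theorem tendstoUniformly_of_tendsto_of_monotone {ι : Type*} {l : Filter ι} {F : ι → ℝ → ℝ}
    (hF : ∀ i, Monotone (F i)) (hF_mem : ∀ i t, F i t ∈ Icc L₀ L₁) (hmono : Monotone g)
    (hcont : Continuous g) (hbot : Tendsto g atBot (𝓝 L₀)) (htop : Tendsto g atTop (𝓝 L₁))
    (hconv : ∀ t, Tendsto (fun i => F i t) l (𝓝 (g t))) :
    TendstoUniformly F g l := by
  refine Metric.tendstoUniformly_iff.2 fun ε hε => ?_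
  have hlower := eventually_forall_sub_lt_of_tendsto hF (fun i t => (hF_mem i t).1) hmono hcont
    hbot htop hconv hε
  -- the upper estimate is the lower one for the reflected functions `t ↦ -F i (-t)`
  have hupper := eventually_forall_sub_lt_of_tendsto (F := fun i t => -F i (-t))
    (g := fun t => -g (-t)) (fun i _ _ h => neg_le_neg (hF i (neg_le_neg h)))
    (fun i t => neg_le_neg (hF_mem i (-t)).2) (fun _ _ h => neg_le_neg (hmono (neg_le_neg h)))
    (hcont.comp continuous_neg).neg (htop.comp tendsto_neg_atBot_atTop).neg
    (hbot.comp tendsto_neg_atTop_atBot).neg (fun t => (hconv (-t)).neg) hε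
  filter_upwards [hlower, hupper] with i hi hi' t
  have := hi' (-t)
  simp only [neg_neg] at this
  rw [Real.dist_eq, abs_lt]
  constructor <;> linarith [hi t]

end Polya

theorem tendstoUniformly_toReal_measure_setOf_le {ι : Type*} {l : Filter ι} {α : ι → Type*}
    [∀ i, MeasurableSpace (α i)] (μ : ∀ i, Measure (α i)) [∀ i, IsProbabilityMeasure (μ i)]
    (f : ∀ i, α i → ℝ) {g : ℝ → ℝ} (hmono : Monotone g) (hcont : Continuous g)
    (hbot : Tendsto g atBot (𝓝 0)) (htop : Tendsto g atTop (𝓝 1))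
    (hconv : ∀ t, Tendsto (fun i => (μ i {x | f i x ≤ t}).toReal) l (𝓝 (g t))) :
    TendstoUniformly (fun i t => (μ i {x | f i x ≤ t}).toReal) g l :=
  tendstoUniformly_of_tendsto_of_monotone
    (fun i _ _ hts => measureReal_mono fun _ hx => le_trans hx hts)
    (fun _ _ => ⟨ENNReal.toReal_nonneg, measureReal_le_one⟩) hmono hcont hbot htop hconv

theorem eventually_forall_mem_of_forall_selection {ι β : Type*} {l : Filter ι} {S : ι → Set β}
    (hS : ∀ i, (S i).Nonempty) {p : ι → β → Prop}
    (h : ∀ x : ι → β, (∀ i, x i ∈ S i) → ∀ᶠ i in l, p i (x i)) :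
    ∀ᶠ i in l, ∀ y ∈ S i, p i y := by
  classical
  by_contra hcon
  have hworst : ∀ i, ∃ y ∈ S i, (∃ z ∈ S i, ¬ p i z) → ¬ p i y := fun i =>
    if hbad : ∃ z ∈ S i, ¬ p i z then ⟨hbad.choose, hbad.choose_spec.1, fun _ => hbad.choose_spec.2⟩
    else ⟨(hS i).some, (hS i).some_mem, fun h => absurd h hbad⟩
  choose x hxS hx using hworst
  obtain ⟨i, hi, hpi⟩ := ((not_eventually.1 hcon).and_eventually (h x hxS)).exists
  push Not at hi
  exact hx i hi hpi

theorem mul_le_abs_of_le_div {r a c : ℝ} (hr : 0 ≤ r) (h : a ≤ c / r) : r * a ≤ |c| := by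
  rw [mul_comm]
  exact mul_le_of_le_div₀ (abs_nonneg c) hr (h.trans (div_le_div_of_nonneg_right (le_abs_self c) hr))

theorem uniform_cdf_convergence_over_shrinking_neighborhoods_general
    {k : ℕ} (Θ : Set (EuclideanSpace ℝ (Fin k)))
    (P : EuclideanSpace ℝ (Fin k) → Measure ℝ)
    (hP : ∀ θ ∈ Θ, IsProbabilityMeasure (P θ))
    (θ₀ : EuclideanSpace ℝ (Fin k)) (hθ₀ : θ₀ ∈ Θ)
    (T : (n : ℕ) → (Fin n → ℝ) → ℝ)
    -- sampling CDF of the statistic under i.i.d. sampling from `P θ`: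
    (G : (n : ℕ) → EuclideanSpace ℝ (Fin k) → ℝ → ℝ)
    (hG : ∀ n θ t, G n θ t = ((Measure.pi fun _ : Fin n => P θ) {y | T n y ≤ t}).toReal)
    -- shrinking neighborhoods:
    (A : ℕ → ℝ → Set (EuclideanSpace ℝ (Fin k)))
    (hA : ∀ n c, A n c = {θ ∈ Θ | ‖θ - θ₀‖ ≤ c / Real.sqrt n})
    -- limiting continuous CDF `GT` of `T`:
    (GT : ℝ → ℝ) (hGT_mono : Monotone GT) (hGT_cont : Continuous GT)
    (hGT_bot : Tendsto GT atBot (𝓝 0)) (hGT_top : Tendsto GT atTop (𝓝 1))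
    -- convergence in distribution under every √n-bounded sequence of parameters:
    (hconv : ∀ θseq : ℕ → EuclideanSpace ℝ (Fin k), (∀ n, θseq n ∈ Θ) →
      (∃ C : ℝ, ∀ n : ℕ, Real.sqrt n * ‖θseq n - θ₀‖ ≤ C) →
      ∀ t : ℝ, Tendsto (fun n => G n (θseq n) t) atTop (𝓝 (GT t))) :
    (∀ c : ℝ, ∀ ε > (0:ℝ), ∃ N : ℕ, ∀ n ≥ N, ∀ θ ∈ A n c, ∀ t : ℝ,
        |G n θ t - GT t| < ε) ∧
      (∀ t : ℝ, Tendsto (fun n => G n θ₀ t) atTop (𝓝 (GT t))) ∧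
      (∀ c : ℝ, ∀ ε > (0:ℝ), ∃ N : ℕ, ∀ n ≥ N, ∀ θ ∈ A n c, ∀ t : ℝ,
        |G n θ t - G n θ₀ t| < ε) := by
  have hnear : ∀ n c, ∀ θ ∈ insert θ₀ (A n c), θ ∈ Θ ∧ √n * ‖θ - θ₀‖ ≤ |c| := by
    rintro n c θ (rfl | hθ)
    · simpa using hθ₀
    · rw [hA] at hθ
      exact ⟨hθ.1, mul_le_abs_of_le_div (Real.sqrt_nonneg n) hθ.2⟩
  have huniform : ∀ c, ∀ ε > (0:ℝ), ∀ᶠ n in atTop, ∀ θ ∈ insert θ₀ (A n c), ∀ t,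
      |G n θ t - GT t| < ε := by
    intro c ε hε
    refine eventually_forall_mem_of_forall_selection (fun n => insert_nonempty _ _)
      fun θseq hθseq => ?_
    have hΘ n := (hnear n c _ (hθseq n)).1
    have := fun n => hP _ (hΘ n)
    have hunif := tendstoUniformly_toReal_measure_setOf_le _ _ hGT_mono hGT_cont hGT_bot hGT_top
      (by simpa only [hG] using hconv θseq hΘ ⟨|c|, fun n => (hnear n c _ (hθseq n)).2⟩)
    filter_upwards [Metric.tendstoUniformly_iff.1 hunif ε hε] with n hn t
    simpa only [hG, Real.dist_eq, abs_sub_comm] using hn t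
  refine ⟨fun c ε hε => ?_, hconv (fun _ => θ₀) (fun _ => hθ₀) ⟨0, by simp⟩, fun c ε hε => ?_⟩
  · obtain ⟨N, hN⟩ := eventually_atTop.1 (huniform c ε hε)
    exact ⟨N, fun n hn θ hθ => hN n hn θ (mem_insert_of_mem _ hθ)⟩
  · obtain ⟨N, hN⟩ := eventually_atTop.1 (huniform c (ε / 2) (half_pos hε))
    refine ⟨N, fun n hn θ hθ t => ?_⟩
    have h₁ := hN n hn θ (mem_insert_of_mem _ hθ) t
    have h₂ := hN n hn θ₀ (mem_insert _ _) t
    rw [abs_lt] at h₁ h₂ ⊢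
    constructor <;> linarith

/-- Lemma on contiguous convergence: if the test statistic `Tₙ` converges in
distribution to `T` (with continuous CDF `GT`) under `P_{θₙ}ⁿ` for every sequence `θₙ` in `Θ`
with `√n‖θₙ − θ₀‖` bounded, then the sampling CDFs `Gₙ(·|θ)` converge to `GT` uniformly in `t`
and uniformly over the shrinking neighborhoods `Aₙ(c) = {θ ∈ Θ : ‖θ − θ₀‖ ≤ c/√n}`; in
particular `Tₙ` converges in distribution to `T` under `P_{θ₀}ⁿ`, and
`sup_{θ ∈ Aₙ(c)} sup_t |Gₙ(t|θ) − Gₙ(t|θ₀)| → 0`. -/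
theorem uniform_cdf_convergence_over_shrinking_neighborhoods
    {k : ℕ} (Θ : Set (EuclideanSpace ℝ (Fin k)))
    (P : EuclideanSpace ℝ (Fin k) → Measure ℝ)
    (hP : ∀ θ ∈ Θ, IsProbabilityMeasure (P θ))
    (θ₀ : EuclideanSpace ℝ (Fin k)) (hθ₀ : θ₀ ∈ Θ)
    (T : (n : ℕ) → (Fin n → ℝ) → ℝ) (hT : ∀ n, Measurable (T n))
    -- sampling CDF of the statistic under i.i.d. sampling from `P θ`:
    (G : (n : ℕ) → EuclideanSpace ℝ (Fin k) → ℝ → ℝ)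
    (hG : ∀ n θ t, G n θ t = ((Measure.pi fun _ : Fin n => P θ) {y | T n y ≤ t}).toReal)
    -- shrinking neighborhoods:
    (A : ℕ → ℝ → Set (EuclideanSpace ℝ (Fin k)))
    (hA : ∀ n c, A n c = {θ ∈ Θ | ‖θ - θ₀‖ ≤ c / Real.sqrt n})
    -- limiting continuous CDF `GT` of `T`:
    (GT : ℝ → ℝ) (hGT_mono : Monotone GT) (hGT_cont : Continuous GT)
    (hGT_bot : Tendsto GT atBot (𝓝 0)) (hGT_top : Tendsto GT atTop (𝓝 1))
    -- convergence in distribution under every √n-bounded sequence of parameters: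
    (hconv : ∀ θseq : ℕ → EuclideanSpace ℝ (Fin k), (∀ n, θseq n ∈ Θ) →
      (∃ C : ℝ, ∀ n : ℕ, Real.sqrt n * ‖θseq n - θ₀‖ ≤ C) →
      ∀ t : ℝ, Tendsto (fun n => G n (θseq n) t) atTop (𝓝 (GT t))) :
    (∀ c : ℝ, ∀ ε > (0:ℝ), ∃ N : ℕ, ∀ n ≥ N, ∀ θ ∈ A n c, ∀ t : ℝ,
        |G n θ t - GT t| < ε) ∧
      (∀ t : ℝ, Tendsto (fun n => G n θ₀ t) atTop (𝓝 (GT t))) ∧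
      (∀ c : ℝ, ∀ ε > (0:ℝ), ∃ N : ℕ, ∀ n ≥ N, ∀ θ ∈ A n c, ∀ t : ℝ,
        |G n θ t - G n θ₀ t| < ε) :=
  uniform_cdf_convergence_over_shrinking_neighborhoods_general Θ P hP θ₀ hθ₀ T G hG A hA GT hGT_mono
    hGT_cont hGT_bot hGT_top hconv
end

section
/- Let ξ and η be real-valued random variables defined on a common probability space, with cumulative distribution functions F and G respectively. Suppose ξ has a Lebesgue density bounded above by a constant M, and E|ξ − η| < ∞. Then sup_{y ∈ ℝ} |G(y) − F(y)| ≤ 2 (M · E|ξ − η|)^{1/2}. -/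
/-!
Couple `ξ` and `η` through the event `{|ξ - η| < δ}`: off it, `η ≤ y` forces `ξ ≤ y + δ` and
`ξ ≤ y - δ` forces `η ≤ y`, while Markov's inequality bounds its complement by `E|ξ - η| / δ`.
The bounded density makes the CDF of `ξ` `M`-Lipschitz, so `|G y - F y| ≤ M δ + E|ξ - η| / δ`
for every `δ > 0`, and optimizing over `δ` gives `2 √(M E|ξ - η|)`.
-/

open MeasureTheory Filter Set Topology

theorem le_two_mul_sqrt_mul_of_forall_le_mul_add_div {a b x : ℝ} (ha : 0 ≤ a) (hb : 0 ≤ b)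
    (h : ∀ δ > 0, x ≤ a * δ + b / δ) : x ≤ 2 * √(a * b) := by
  -- `δ = (√b + t) / (√a + t)` is the optimal `√b / √a` perturbed so as to stay positive.
  have happrox : ∀ t > 0, x ≤ 2 * √(a * b) + t * (√a + √b) := by
    intro t ht
    have hsa := Real.sqrt_nonneg a
    have hsb := Real.sqrt_nonneg b
    have hδ : 0 < (√b + t) / (√a + t) := by positivity
    have hleft : a * ((√b + t) / (√a + t)) ≤ √a * (√b + t) := by
      rw [mul_div_assoc', div_le_iff₀ (by positivity)]
      nlinarith [Real.mul_self_sqrt ha, mul_nonneg (mul_nonneg hsa (add_nonneg hsb ht.le)) ht.le]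
    have hright : b / ((√b + t) / (√a + t)) ≤ √b * (√a + t) := by
      rw [div_div_eq_mul_div, div_le_iff₀ (by positivity)]
      nlinarith [Real.mul_self_sqrt hb, mul_nonneg (mul_nonneg hsb (add_nonneg hsa ht.le)) ht.le]
    rw [Real.sqrt_mul ha]
    linarith [h _ hδ]
  have hlim : Tendsto (fun t => 2 * √(a * b) + t * (√a + √b)) (𝓝[>] 0) (𝓝 (2 * √(a * b))) := by
    have hcont : Continuous fun t : ℝ => 2 * √(a * b) + t * (√a + √b) := by fun_prop
    simpa using (hcont.tendsto 0).mono_left nhdsWithin_le_nhds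
  exact ge_of_tendsto hlim (eventually_nhdsWithin_of_forall happrox)

theorem withDensity_le_smul_of_le {α : Type*} [MeasurableSpace α] (μ : Measure α)
    {f : α → ENNReal} {c : ENNReal} (hf : ∀ x, f x ≤ c) : μ.withDensity f ≤ c • μ :=
  calc μ.withDensity f ≤ μ.withDensity fun _ => c := withDensity_mono (ae_of_all _ hf)
    _ = c • μ := withDensity_const c

theorem measureReal_Iic_le_add_of_le_smul_volume {ν : Measure ℝ} {M a b : ℝ} (hM : 0 ≤ M)
    (hν : ν ≤ ENNReal.ofReal M • volume) (hab : a ≤ b) :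
    ν.real (Iic b) ≤ ν.real (Iic a) + M * (b - a) := by
  have hIoc : ν.real (Ioc a b) ≤ M * (b - a) := by
    refine ENNReal.toReal_le_of_le_ofReal (mul_nonneg hM (sub_nonneg.2 hab)) ?_
    calc ν (Ioc a b) ≤ (ENNReal.ofReal M • volume) (Ioc a b) := hν _
      _ = ENNReal.ofReal (M * (b - a)) := by
        rw [Measure.smul_apply, Real.volume_Ioc, smul_eq_mul, ← ENNReal.ofReal_mul hM]
  calc ν.real (Iic b) = ν.real (Iic a ∪ Ioc a b) := by rw [Iic_union_Ioc_eq_Iic hab]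
    _ ≤ ν.real (Iic a) + ν.real (Ioc a b) := measureReal_union_le _ _
    _ ≤ ν.real (Iic a) + M * (b - a) := by gcongr

theorem measureReal_le_le_add_measureReal_le_abs_sub {Ω : Type*} [MeasurableSpace Ω]
    (μ : Measure Ω) [IsFiniteMeasure μ] (X Y : Ω → ℝ) {x z δ : ℝ} (hxz : x + δ ≤ z) :
    μ.real {ω | Y ω ≤ x} ≤ μ.real {ω | X ω ≤ z} + μ.real {ω | δ ≤ |X ω - Y ω|} := by
  have hsub : {ω | Y ω ≤ x} ⊆ {ω | X ω ≤ z} ∪ {ω | δ ≤ |X ω - Y ω|} := by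
    intro ω (hω : Y ω ≤ x)
    rcases le_or_gt δ |X ω - Y ω| with hfar | hnear
    · exact Or.inr hfar
    · exact Or.inl (show X ω ≤ z by linarith [(abs_lt.mp hnear).2])
  exact (measureReal_mono hsub).trans (measureReal_union_le _ _)

theorem ks_distance_le_of_bounded_density_general
    {Ω : Type*} [MeasurableSpace Ω] (μ : Measure Ω) [IsProbabilityMeasure μ]
    (ξ η : Ω → ℝ) (hξ : Measurable ξ)
    (f : ℝ → ℝ) (M : ℝ)
    (hdens : μ.map ξ = volume.withDensity fun y => ENNReal.ofReal (f y))
    (hf_nonneg : ∀ y, 0 ≤ f y) (hf_le : ∀ y, f y ≤ M)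
    (hint : Integrable (fun ω => |ξ ω - η ω|) μ)
    (F G : ℝ → ℝ)
    (hF : ∀ y, F y = (μ {ω | ξ ω ≤ y}).toReal)
    (hG : ∀ y, G y = (μ {ω | η ω ≤ y}).toReal) :
    ⨆ y : ℝ, |G y - F y| ≤ 2 * Real.sqrt (M * ∫ ω, |ξ ω - η ω| ∂μ) := by
  simp only [← measureReal_def] at hF hG
  have hM : 0 ≤ M := (hf_nonneg 0).trans (hf_le 0)
  have hν : μ.map ξ ≤ ENNReal.ofReal M • volume :=
    hdens ▸ withDensity_le_smul_of_le _ fun y => ENNReal.ofReal_le_ofReal (hf_le y)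
  have hF_lip : ∀ a b, a ≤ b → F b ≤ F a + M * (b - a) := fun a b hab => by
    have := measureReal_Iic_le_add_of_le_smul_volume hM hν hab
    rw [map_measureReal_apply hξ measurableSet_Iic, map_measureReal_apply hξ measurableSet_Iic]
      at this
    rw [hF, hF]
    exact this
  refine ciSup_le fun y => le_two_mul_sqrt_mul_of_forall_le_mul_add_div hM
    (integral_nonneg fun _ => abs_nonneg _) fun δ hδ => ?_
  have hmarkov : μ.real {ω | δ ≤ |ξ ω - η ω|} ≤ (∫ ω, |ξ ω - η ω| ∂μ) / δ := by
    rw [le_div_iff₀ hδ, mul_comm]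
    exact mul_meas_ge_le_integral_of_nonneg (ae_of_all _ fun _ => abs_nonneg _) hint δ
  have hGF := measureReal_le_le_add_measureReal_le_abs_sub μ ξ η (le_refl (y + δ))
  have hFG := measureReal_le_le_add_measureReal_le_abs_sub μ η ξ (sub_add_cancel y δ).le
  simp only [abs_sub_comm (η _)] at hFG
  have h_up := hF_lip y (y + δ) (by linarith)
  have h_down := hF_lip (y - δ) y (by linarith)
  rw [← hG, ← hF] at hGF hFG
  rw [abs_le]
  constructor <;> linarith

/-- Lemma 3.1 of Wang–Tokdar style:
If `ξ` has a Lebesgue density bounded by `M` and `E|ξ − η| < ∞`, then the Kolmogorov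
distance between the CDFs of `η` and `ξ` is at most `2 √(M · E|ξ − η|)`. -/
theorem ks_distance_le_of_bounded_density
    {Ω : Type*} [MeasurableSpace Ω] (μ : Measure Ω) [IsProbabilityMeasure μ]
    (ξ η : Ω → ℝ) (hξ : Measurable ξ) (hη : Measurable η)
    (f : ℝ → ℝ) (M : ℝ)
    (hdens : μ.map ξ = volume.withDensity fun y => ENNReal.ofReal (f y))
    (hf_nonneg : ∀ y, 0 ≤ f y) (hf_le : ∀ y, f y ≤ M)
    (hint : Integrable (fun ω => |ξ ω - η ω|) μ)
    (F G : ℝ → ℝ)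
    (hF : ∀ y, F y = (μ {ω | ξ ω ≤ y}).toReal)
    (hG : ∀ y, G y = (μ {ω | η ω ≤ y}).toReal) :
    ⨆ y : ℝ, |G y - F y| ≤ 2 * Real.sqrt (M * ∫ ω, |ξ ω - η ω| ∂μ) :=
  ks_distance_le_of_bounded_density_general μ ξ η hξ f M hdens hf_nonneg hf_le hint F G hF hG
end

section
/- Let (Xₙ) be a sequence of real-valued random variables with cumulative distribution functions Gₙ, and suppose Xₙ converges in distribution to a random variable X whose cumulative distribution function G is continuous on ℝ. Then the random variables 1 − Gₙ(Xₙ) converge in distribution to the uniform distribution on [0,1]. -/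
/-!
Write `q_n = P(G_n(X_n) < s)`, so that `P(1 - G_n(X_n) ≤ t) = 1 - q_n` for `s = 1 - t`.
Since `G_n` is monotone, `G_n(c) ≤ q_n` whenever `G_n(c) < s`, and `q_n ≤ G_n(c)` whenever
`s < G_n(c)`. The limit `G` is continuous with limits `0` and `1`, so it attains every level in
`(0, 1)`; choosing `c` with `G(c)` slightly below or slightly above `s` and using `G_n(c) → G(c)`
squeezes `q_n` to `s` clamped to `[0, 1]`.
-/

open MeasureTheory Filter Topology Set ProbabilityTheory

theorem Ioo_subset_range_of_tendsto {α : Type*} [LinearOrder α] [TopologicalSpace α]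
    [OrderClosedTopology α] {f : ℝ → α} {a b : α} (hf : Continuous f)
    (hbot : Tendsto f atBot (𝓝 a)) (htop : Tendsto f atTop (𝓝 b)) : Ioo a b ⊆ range f :=
  fun _ hy => mem_range_of_exists_le_of_exists_ge hf
    ((hbot.eventually_lt_const hy.1).exists.imp fun _ => le_of_lt)
    ((htop.eventually_const_lt hy.2).exists.imp fun _ => le_of_lt)

theorem ProbabilityTheory.cdf_map_apply {Ω : Type*} [MeasurableSpace Ω] {μ : Measure Ω}
    [IsProbabilityMeasure μ] {Y : Ω → ℝ} (hY : Measurable Y) (x : ℝ) :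
    cdf (μ.map Y) x = μ.real {ω | Y ω ≤ x} := by
  have := Measure.isProbabilityMeasure_map (μ := μ) hY.aemeasurable
  rw [cdf_eq_real, map_measureReal_apply hY measurableSet_Iic]
  rfl

theorem ProbabilityTheory.Ioo_subset_range_cdf {ν : Measure ℝ} (h : Continuous (cdf ν)) :
    Ioo 0 1 ⊆ range (cdf ν) :=
  Ioo_subset_range_of_tendsto h (tendsto_cdf_atBot ν) (tendsto_cdf_atTop ν)

section MonotoneComp

variable {Ω α β : Type*} [MeasurableSpace Ω] {μ : Measure Ω} [IsFiniteMeasure μ]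
  [LinearOrder α] [LinearOrder β] {F : α → β} {Y : Ω → α} {c : α} {s : β}

theorem measureReal_setOf_le_le_measureReal_comp_lt (hF : Monotone F) (h : F c < s) :
    μ.real {ω | Y ω ≤ c} ≤ μ.real {ω | F (Y ω) < s} :=
  measureReal_mono fun _ hω => (hF hω).trans_lt h

theorem measureReal_comp_lt_le_measureReal_setOf_le (hF : Monotone F) (h : s ≤ F c) :
    μ.real {ω | F (Y ω) < s} ≤ μ.real {ω | Y ω ≤ c} :=
  measureReal_mono fun _ hω => (hF.reflect_lt (lt_of_lt_of_le hω h)).le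

end MonotoneComp

theorem tendsto_max_zero_min_one_of_bracketed {ι : Type*} {l : Filter ι} {G : ι → ℝ → ℝ}
    {Glim : ℝ → ℝ} {q : ι → ℝ} {s : ℝ} (hrange : Ioo 0 1 ⊆ range Glim)
    (hconv : ∀ c, Tendsto (G · c) l (𝓝 (Glim c))) (hq : ∀ i, q i ∈ Icc 0 1)
    (hle : ∀ i c, G i c < s → G i c ≤ q i) (hge : ∀ i c, s < G i c → q i ≤ G i c) :
    Tendsto q l (𝓝 (max 0 (min s 1))) := by
  refine tendsto_order.2 ⟨fun a ha => ?_, fun b hb => ?_⟩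
  · rcases lt_or_ge a 0 with ha0 | ha0
    · exact .of_forall fun i => ha0.trans_le (hq i).1
    have has : a < min s 1 := by simpa [ha0.not_gt] using ha
    obtain ⟨v, hav, hvs⟩ := exists_between has
    obtain ⟨c, rfl⟩ := hrange ⟨ha0.trans_lt hav, hvs.trans_le (min_le_right _ _)⟩
    filter_upwards [(hconv c).eventually (Ioo_mem_nhds hav (hvs.trans_le (min_le_left _ _)))]
      with i hi
    exact hi.1.trans_le (hle i c hi.2)
  · rcases lt_or_ge 1 b with hb1 | hb1
    · exact .of_forall fun i => (hq i).2.trans_lt hb1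
    obtain ⟨hb0, hsb⟩ := max_lt_iff.1 hb
    have hsb : max s 0 < b := max_lt (by simpa [hb1.not_gt] using hsb) hb0
    obtain ⟨v, hsv, hvb⟩ := exists_between hsb
    obtain ⟨c, rfl⟩ := hrange ⟨(le_max_right _ _).trans_lt hsv, hvb.trans_le hb1⟩
    filter_upwards [(hconv c).eventually (Ioo_mem_nhds ((le_max_left _ _).trans_lt hsv) hvb)]
      with i hi
    exact (hge i c hi.1).trans_lt hi.2

/-- if `Xₙ` converges in distribution to `X` whose CDF `G` is continuous
(convergence in distribution of real random variables being pointwise convergence of CDFs at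
continuity points of the continuous limit, i.e. everywhere), then `1 − Gₙ(Xₙ)` converges in
distribution to the uniform distribution on `[0,1]` (whose CDF is `t ↦ max 0 (min t 1)`). -/
theorem one_sub_cdf_eval_tendsto_uniform
    {Ω : Type*} [MeasurableSpace Ω] (μ : Measure Ω) [IsProbabilityMeasure μ]
    (X : ℕ → Ω → ℝ) (hX : ∀ n, Measurable (X n))
    (G : ℕ → ℝ → ℝ)
    (hG : ∀ n t, G n t = (μ {ω | X n ω ≤ t}).toReal)
    (Xlim : Ω → ℝ) (hXlim : Measurable Xlim)
    (Glim : ℝ → ℝ)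
    (hGlim : ∀ t, Glim t = (μ {ω | Xlim ω ≤ t}).toReal)
    (hcont : Continuous Glim)
    (hconv : ∀ t, Tendsto (fun n => G n t) atTop (𝓝 (Glim t))) :
    ∀ t : ℝ, Tendsto (fun n => (μ {ω | 1 - G n (X n ω) ≤ t}).toReal) atTop
      (𝓝 (max 0 (min t 1))) := by
  have hGcdf (n : ℕ) : G n = cdf (μ.map (X n)) := funext fun t => by
    rw [hG, cdf_map_apply (hX n), measureReal_def]
  have hGlim_cdf : Glim = cdf (μ.map Xlim) := funext fun t => by
    rw [hGlim, cdf_map_apply hXlim, measureReal_def]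
  have hmono (n : ℕ) : Monotone (G n) := hGcdf n ▸ monotone_cdf _
  have hrange : Ioo 0 1 ⊆ range Glim := by
    rw [hGlim_cdf] at hcont ⊢
    exact Ioo_subset_range_cdf hcont
  intro t
  have hq : Tendsto (fun n => μ.real {ω | G n (X n ω) < 1 - t}) atTop
      (𝓝 (max 0 (min (1 - t) 1))) :=
    tendsto_max_zero_min_one_of_bracketed hrange hconv
      (fun n => ⟨measureReal_nonneg, measureReal_le_one⟩)
      (fun n c hc => (hG n c).trans_le (measureReal_setOf_le_le_measureReal_comp_lt (hmono n) hc))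
      (fun n c hc => (measureReal_comp_lt_le_measureReal_setOf_le (hmono n) hc.le).trans_eq
        (hG n c).symm)
  have hcompl (n : ℕ) : (μ {ω | 1 - G n (X n ω) ≤ t}).toReal =
      1 - μ.real {ω | G n (X n ω) < 1 - t} := by
    have hset : {ω | 1 - G n (X n ω) ≤ t} = {ω | G n (X n ω) < 1 - t}ᶜ := by
      ext ω
      simp only [mem_ofPred_eq, mem_compl_iff, not_lt, sub_le_comm]
    rw [← measureReal_def, hset]
    exact probReal_compl_eq_one_sub (measurableSet_lt ((hmono n).measurable.comp (hX n))
      measurable_const)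
  have hclamp : 1 - max 0 (min (1 - t) 1) = max 0 (min t 1) := by grind
  simp only [hcompl, ← hclamp]
  exact tendsto_const_nhds.sub hq
end

section
/- Let {p_θ : θ ∈ Θ ⊆ ℝ^k} be a family of probability densities on ℝ with respect to Lebesgue measure such that θ ↦ p_θ(u) is continuously differentiable for every u, and let s(θ)(u) = ∇_θ log p_θ(u) denote the score. Let θ₀ lie in the interior of Θ and suppose there exists ε > 0 such that ∫ sup_{θ ∈ B_ε(θ₀)} ‖s(θ)(u)‖ p_{θ₀}(u) du < ∞, where B_ε(θ₀) is the open ball of radius ε around θ₀. Then for every y ∈ ℝ, the map θ ↦ P_θ(y) = ∫_{−∞}^{y} p_θ(u) du is differentiable at θ₀ with gradient Ṗ_{θ₀}(y) = ∫_{−∞}^{y} s(θ₀)(u) p_{θ₀}(u) du; equivalently, the gradient of the CDF in the parameter equals E_{θ₀}[s(θ₀)(Y) 1(Y ≤ y)]. -/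
/-!
The gradient `p_θ • s_θ` of `θ ↦ p_θ(u)` has norm at most `M(u) p_θ(u)` on the ball, so
Grönwall's inequality along segments gives the one-sided bound
`p_{θ₀}(u) - p_θ(u) ≤ M(u) p_{θ₀}(u) ‖θ - θ₀‖` with `∫ M p_{θ₀} < ∞`. It dominates the
negative part of the first-order remainder `R_θ = p_θ - p_{θ₀} - ⟪p_{θ₀} s_{θ₀}, θ - θ₀⟫`, so
`∫ R_θ⁻ = o(‖θ - θ₀‖)` by dominated convergence; the positive part has no integrable majorant.
Since every `p_θ` has mass one, `∫ R_θ = -⟪∫ p_{θ₀} s_{θ₀}, θ - θ₀⟫ ≥ -∫ R_θ⁻`, and Fermat's rule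
at the resulting local maximum shows `∫ p_{θ₀} s_{θ₀} = 0`. Then `∫ |R_θ| = 2 ∫ R_θ⁻`, so
`θ ↦ p_θ` is differentiable in `L¹` at `θ₀`, which differentiates every `∫_A p_θ`.
-/

open MeasureTheory Filter Metric
open Topology Asymptotics
open scoped RealInnerProductSpace

theorem norm_le_norm_mul_exp_of_norm_fderiv_le {E F : Type*}
    [NormedAddCommGroup E] [NormedSpace ℝ E] [NormedAddCommGroup F] [NormedSpace ℝ F]
    {f : E → F} {f' : E → E →L[ℝ] F} {s : Set E} {C : ℝ} (hs : Convex ℝ s)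
    (hf : ∀ x ∈ s, HasFDerivAt f (f' x) x) (hbound : ∀ x ∈ s, ‖f' x‖ ≤ C * ‖f x‖)
    {x y : E} (hx : x ∈ s) (hy : y ∈ s) :
    ‖f y‖ ≤ ‖f x‖ * Real.exp (C * ‖y - x‖) := by
  have hmem : ∀ t ∈ Set.Icc (0 : ℝ) 1, x + t • (y - x) ∈ s := fun t ht =>
    hs.add_smul_sub_mem hx hy ht
  have hderiv : ∀ t ∈ Set.Icc (0 : ℝ) 1,
      HasDerivAt (fun t : ℝ => f (x + t • (y - x))) (f' (x + t • (y - x)) (y - x)) t := by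
    intro t ht
    refine (hf _ (hmem t ht)).comp_hasDerivAt t ?_
    simpa using ((hasDerivAt_id t).smul_const (y - x)).const_add x
  have hgronwall := norm_le_gronwallBound_of_norm_deriv_right_le (δ := ‖f x‖)
    (K := C * ‖y - x‖) (ε := 0) (fun t ht => (hderiv t ht).continuousAt.continuousWithinAt)
    (fun t ht => (hderiv t (Set.Ico_subset_Icc_self ht)).hasDerivWithinAt)
    (by simp) (fun t ht => ?_) 1 (by simp)
  · simpa [gronwallBound_ε0] using hgronwall
  · have ht' := hmem t (Set.Ico_subset_Icc_self ht)
    calc ‖f' (x + t • (y - x)) (y - x)‖ ≤ ‖f' (x + t • (y - x))‖ * ‖y - x‖ :=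
          (f' _).le_opNorm _
      _ ≤ C * ‖f (x + t • (y - x))‖ * ‖y - x‖ := by gcongr; exact hbound _ ht'
      _ = C * ‖y - x‖ * ‖f (x + t • (y - x))‖ + 0 := by ring

theorem norm_sub_norm_le_of_norm_fderiv_le {E F : Type*}
    [NormedAddCommGroup E] [NormedSpace ℝ E] [NormedAddCommGroup F] [NormedSpace ℝ F]
    {f : E → F} {f' : E → E →L[ℝ] F} {s : Set E} {C : ℝ} (hs : Convex ℝ s)
    (hf : ∀ x ∈ s, HasFDerivAt f (f' x) x) (hbound : ∀ x ∈ s, ‖f' x‖ ≤ C * ‖f x‖)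
    {x y : E} (hx : x ∈ s) (hy : y ∈ s) :
    ‖f x‖ - ‖f y‖ ≤ C * ‖f x‖ * ‖y - x‖ := by
  have hexp := norm_le_norm_mul_exp_of_norm_fderiv_le hs hf hbound hy hx
  rw [norm_sub_rev] at hexp
  set c := C * ‖y - x‖
  have hlow : ‖f x‖ * Real.exp (-c) ≤ ‖f y‖ := by
    calc ‖f x‖ * Real.exp (-c) ≤ ‖f y‖ * Real.exp c * Real.exp (-c) := by gcongr
      _ = ‖f y‖ := by rw [mul_assoc, ← Real.exp_add, add_neg_cancel, Real.exp_zero, mul_one]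
  nlinarith [Real.add_one_le_exp (-c), norm_nonneg (f x)]

theorem sub_le_mul_norm_of_hasGradientAt_smul {E : Type*} [NormedAddCommGroup E]
    [InnerProductSpace ℝ E] [CompleteSpace E] {f : E → ℝ} {σ : E → E} {s : Set E} {M : ℝ}
    (hs : Convex ℝ s) (hf_nonneg : ∀ x ∈ s, 0 ≤ f x)
    (hf : ∀ x ∈ s, HasGradientAt f (f x • σ x) x) (hσ : ∀ x ∈ s, ‖σ x‖ ≤ M)
    {x y : E} (hx : x ∈ s) (hy : y ∈ s) :
    f x - f y ≤ M * f x * ‖y - x‖ := by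
  have hbound : ∀ z ∈ s, ‖InnerProductSpace.toDual ℝ E (f z • σ z)‖ ≤ M * ‖f z‖ := by
    intro z hz
    rw [LinearIsometryEquiv.norm_map, norm_smul, mul_comm]
    gcongr
    exact hσ z hz
  have := norm_sub_norm_le_of_norm_fderiv_le hs (fun z hz => (hf z hz).hasFDerivAt) hbound hx hy
  rwa [Real.norm_of_nonneg (hf_nonneg x hx), Real.norm_of_nonneg (hf_nonneg y hy)] at this

section

variable {α : Type*} [MeasurableSpace α] {μ : Measure α}

theorem isLittleO_integral_of_dominated {ι : Type*} {l : Filter ι} [l.IsCountablyGenerated]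
    {f : ι → α → ℝ} {r : ι → ℝ} {B : α → ℝ} (hf_nonneg : ∀ i u, 0 ≤ f i u)
    (hf_meas : ∀ᶠ i in l, AEMeasurable (f i) μ)
    (hbound : ∀ᶠ i in l, ∀ᵐ u ∂μ, f i u ≤ B u * |r i|)
    (hB : ∫⁻ u, ENNReal.ofReal (B u) ∂μ ≠ ⊤)
    (hlim : ∀ᵐ u ∂μ, (fun i => f i u) =o[l] r) :
    (fun i => ∫ u, f i u ∂μ) =o[l] r := by
  have hzero : ∀ᶠ i in l, |r i| = 0 → ∫ u, f i u ∂μ = 0 := by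
    filter_upwards [hbound] with i hi hr
    refine integral_eq_zero_of_ae ?_
    filter_upwards [hi] with u hu
    exact le_antisymm (by simpa [hr] using hu) (hf_nonneg i u)
  rw [← isLittleO_abs_right, isLittleO_iff_tendsto' hzero]
  have hlint : Tendsto (fun i => ∫⁻ u, ENNReal.ofReal (f i u / |r i|) ∂μ) l (𝓝 0) := by
    refine lintegral_zero (μ := μ) ▸ tendsto_lintegral_filter_of_dominated_convergence'
      (fun u => ENNReal.ofReal (B u)) (hf_meas.mono fun i hi => (hi.div_const _).ennreal_ofReal)
      ?_ hB ?_
    · filter_upwards [hbound] with i hi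
      filter_upwards [hi] with u hu
      rcases eq_or_ne (r i) 0 with hr | hr
      · simp [hr]
      · exact ENNReal.ofReal_le_ofReal ((div_le_iff₀ (abs_pos.mpr hr)).mpr hu)
    · filter_upwards [hlim] with u hu
      simpa [Function.comp_def] using (ENNReal.continuous_ofReal.tendsto 0).comp
        (isLittleO_abs_right.mpr hu).tendsto_div_nhds_zero
  refine ((ENNReal.tendsto_toReal ENNReal.zero_ne_top).comp hlint).congr' ?_
  filter_upwards [hf_meas] with i hi
  rw [Function.comp_apply, ← integral_div, integral_eq_lintegral_of_nonneg_ae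
    (Eventually.of_forall fun u => div_nonneg (hf_nonneg i u) (abs_nonneg _))
    (hi.div_const _).aestronglyMeasurable]

variable {E : Type*} [NormedAddCommGroup E] [InnerProductSpace ℝ E]
  {F : E → α → ℝ} {g : α → E} {θ₀ : E}

theorem aestronglyMeasurable_inner_of_hasGradientAt [CompleteSpace E]
    (hF : ∀ᶠ θ in 𝓝 θ₀, AEStronglyMeasurable (F θ) μ)
    (hg : ∀ᵐ u ∂μ, HasGradientAt (F · u) (g u) θ₀) (v : E) :
    AEStronglyMeasurable (fun u => ⟪v, g u⟫) μ := by
  set t : ℕ → ℝ := fun n => 1 / ((n : ℝ) + 1)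
  have ht : Tendsto t atTop (𝓝[≠] 0) :=
    tendsto_nhdsWithin_iff.mpr ⟨tendsto_one_div_add_atTop_nhds_zero_nat,
      Eventually.of_forall fun n => (by positivity : t n ≠ 0)⟩
  have hline : Tendsto (fun τ : ℝ => θ₀ + τ • v) (𝓝 0) (𝓝 θ₀) :=
    (by fun_prop : Continuous fun τ : ℝ => θ₀ + τ • v).tendsto' 0 θ₀ (by simp)
  obtain ⟨N, hN⟩ := eventually_atTop.mp
    ((hline.comp (ht.mono_right nhdsWithin_le_nhds)).eventually hF)
  refine aestronglyMeasurable_of_tendsto_ae atTop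
    (f := fun n u => (t (n + N))⁻¹ • (F (θ₀ + t (n + N) • v) u - F θ₀ u))
    (fun n => ((hN _ (Nat.le_add_left N n)).sub hF.self_of_nhds).const_smul (t (n + N))⁻¹) ?_
  filter_upwards [hg] with u hu
  have hslope := (hu.hasFDerivAt.hasLineDerivAt v).tendsto_slope_zero.comp
    ((tendsto_add_atTop_iff_nat N).mpr ht)
  simpa [real_inner_comm, Function.comp_def] using hslope

theorem aestronglyMeasurable_of_hasGradientAt [CompleteSpace E] [FiniteDimensional ℝ E]
    (hF : ∀ᶠ θ in 𝓝 θ₀, AEStronglyMeasurable (F θ) μ)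
    (hg : ∀ᵐ u ∂μ, HasGradientAt (F · u) (g u) θ₀) :
    AEStronglyMeasurable g μ := by
  let b := stdOrthonormalBasis ℝ E
  have hsum : (fun u => ∑ i, ⟪b i, g u⟫ • b i) = g := funext fun u => b.sum_repr' (g u)
  rw [← hsum]
  exact Finset.aestronglyMeasurable_fun_sum _ fun i _ =>
    (aestronglyMeasurable_inner_of_hasGradientAt hF hg (b i)).smul_const _

def firstOrderRemainder (F : E → α → ℝ) (g : α → E) (θ₀ θ : E) (u : α) : ℝ :=
  F θ u - F θ₀ u - ⟪g u, θ - θ₀⟫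

theorem integrable_firstOrderRemainder {θ : E} (hθ : Integrable (F θ) μ)
    (hθ₀ : Integrable (F θ₀) μ) (hg : Integrable g μ) :
    Integrable (firstOrderRemainder F g θ₀ θ) μ :=
  (hθ.sub hθ₀).sub (hg.inner_const _)

theorem integral_firstOrderRemainder [CompleteSpace E] {θ : E} (hθ : Integrable (F θ) μ)
    (hθ₀ : Integrable (F θ₀) μ) (hg : Integrable g μ) :
    ∫ u, firstOrderRemainder F g θ₀ θ u ∂μ =
      ∫ u, F θ u ∂μ - ∫ u, F θ₀ u ∂μ - ⟪∫ u, g u ∂μ, θ - θ₀⟫ := by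
  simp only [firstOrderRemainder]
  rw [integral_sub (f := fun u => F θ u - F θ₀ u) (hθ.sub hθ₀) (hg.inner_const _),
    integral_sub hθ hθ₀]
  simp_rw [real_inner_comm (θ - θ₀)]
  rw [integral_inner hg]

theorem isLittleO_integral_negPart_firstOrderRemainder [CompleteSpace E] {G : α → ℝ}
    (hF_int : ∀ᶠ θ in 𝓝 θ₀, Integrable (F θ) μ)
    (hg : ∀ᵐ u ∂μ, HasGradientAt (F · u) (g u) θ₀) (hg_int : Integrable g μ)
    (hlower : ∀ᶠ θ in 𝓝 θ₀, ∀ᵐ u ∂μ, F θ₀ u - F θ u ≤ G u * ‖θ - θ₀‖)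
    (hG : ∫⁻ u, ENNReal.ofReal (G u) ∂μ ≠ ⊤) :
    (fun θ => ∫ u, (firstOrderRemainder F g θ₀ θ u)⁻ ∂μ) =o[𝓝 θ₀] (fun θ => θ - θ₀) := by
  rw [← isLittleO_norm_right]
  refine isLittleO_integral_of_dominated (B := fun u => max (G u) 0 + ‖g u‖)
    (fun _ _ => negPart_nonneg _) ?_ ?_ ?_ ?_
  · filter_upwards [hF_int] with θ hθ
    exact (integrable_firstOrderRemainder hθ hF_int.self_of_nhds hg_int).aemeasurable.neg.sup
      aemeasurable_const
  · filter_upwards [hlower] with θ hθ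
    filter_upwards [hθ] with u hu
    have hinner : ⟪g u, θ - θ₀⟫ ≤ ‖g u‖ * ‖θ - θ₀‖ := real_inner_le_norm _ _
    have hG_le : G u * ‖θ - θ₀‖ ≤ max (G u) 0 * ‖θ - θ₀‖ := by gcongr; exact le_max_left _ _
    rw [abs_of_nonneg (norm_nonneg _), negPart_def]
    refine sup_le ?_ (by positivity)
    simp only [firstOrderRemainder]
    linarith
  · have hg_fin : ∫⁻ u, ENNReal.ofReal ‖g u‖ ∂μ ≠ ⊤ := hg_int.norm.lintegral_lt_top.ne
    refine ne_top_of_le_ne_top (ENNReal.add_ne_top.mpr ⟨hG, hg_fin⟩) ?_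
    rw [← lintegral_add_right' _ hg_int.norm.aemeasurable.ennreal_ofReal]
    refine lintegral_mono fun u => (ENNReal.ofReal_add_le).trans ?_
    simp
  · filter_upwards [hg] with u hu
    refine (isBigO_of_le _ fun θ => ?_).trans_isLittleO
      (hasFDerivAt_iff_isLittleO.mp hu.hasFDerivAt).norm_right
    rw [Real.norm_of_nonneg (negPart_nonneg _), negPart_def]
    exact sup_le (neg_le_abs _) (abs_nonneg _)

theorem integral_eq_zero_of_isLittleO_integral_negPart_firstOrderRemainder [CompleteSpace E]
    (hF_int : ∀ᶠ θ in 𝓝 θ₀, Integrable (F θ) μ)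
    (hF_mass : ∀ᶠ θ in 𝓝 θ₀, ∫ u, F θ u ∂μ = ∫ u, F θ₀ u ∂μ) (hg_int : Integrable g μ)
    (hneg : (fun θ => ∫ u, (firstOrderRemainder F g θ₀ θ u)⁻ ∂μ) =o[𝓝 θ₀] (fun θ => θ - θ₀)) :
    ∫ u, g u ∂μ = 0 := by
  set Φ := fun θ => ∫ u, (firstOrderRemainder F g θ₀ θ u)⁻ ∂μ
  have hΦ₀ : Φ θ₀ = 0 := by simp [Φ, firstOrderRemainder]
  have hΦ : HasFDerivAt Φ (0 : E →L[ℝ] ℝ) θ₀ := hasFDerivAt_iff_isLittleO.mpr (by simpa [hΦ₀])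
  have hmax : IsLocalMax (fun θ => ⟪∫ u, g u ∂μ, θ⟫ - Φ θ) θ₀ := by
    filter_upwards [hF_int, hF_mass] with θ hθ hmass
    have hR := integrable_firstOrderRemainder hθ hF_int.self_of_nhds hg_int
    have hmean := integral_firstOrderRemainder hθ hF_int.self_of_nhds hg_int
    have hle : -∫ u, firstOrderRemainder F g θ₀ θ u ∂μ ≤ Φ θ := by
      rw [← integral_neg]
      exact integral_mono hR.neg hR.neg_part fun u => neg_le_negPart _
    rw [hmass, inner_sub_right] at hmean
    simp only [hΦ₀]
    linarith
  have hzero := hmax.hasFDerivAt_eq_zero (((innerSL ℝ (∫ u, g u ∂μ)).hasFDerivAt).sub hΦ)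
  rw [sub_zero] at hzero
  simpa using congrArg norm hzero

theorem isLittleO_integral_abs_firstOrderRemainder [CompleteSpace E] {G : α → ℝ}
    (hF_int : ∀ᶠ θ in 𝓝 θ₀, Integrable (F θ) μ)
    (hF_mass : ∀ᶠ θ in 𝓝 θ₀, ∫ u, F θ u ∂μ = ∫ u, F θ₀ u ∂μ)
    (hg : ∀ᵐ u ∂μ, HasGradientAt (F · u) (g u) θ₀) (hg_int : Integrable g μ)
    (hlower : ∀ᶠ θ in 𝓝 θ₀, ∀ᵐ u ∂μ, F θ₀ u - F θ u ≤ G u * ‖θ - θ₀‖)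
    (hG : ∫⁻ u, ENNReal.ofReal (G u) ∂μ ≠ ⊤) :
    (fun θ => ∫ u, |firstOrderRemainder F g θ₀ θ u| ∂μ) =o[𝓝 θ₀] (fun θ => θ - θ₀) := by
  have hneg := isLittleO_integral_negPart_firstOrderRemainder hF_int hg hg_int hlower hG
  have hmean := integral_eq_zero_of_isLittleO_integral_negPart_firstOrderRemainder
    hF_int hF_mass hg_int hneg
  refine (hneg.const_mul_left 2).congr' ?_ EventuallyEq.rfl
  filter_upwards [hF_int, hF_mass] with θ hθ hmass
  have hR := integrable_firstOrderRemainder hθ hF_int.self_of_nhds hg_int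
  have hint := integral_firstOrderRemainder hθ hF_int.self_of_nhds hg_int
  rw [hmass, hmean, inner_zero_left, sub_self, sub_zero] at hint
  have habs : ∀ a : ℝ, |a| = a + 2 * a⁻ := fun a => by
    linarith [posPart_add_negPart a, posPart_sub_negPart a]
  simp_rw [habs]
  rw [integral_add (g := fun u => 2 * (firstOrderRemainder F g θ₀ θ u)⁻) hR
    (hR.neg_part.const_mul 2), integral_const_mul, hint, zero_add]

theorem hasGradientAt_setIntegral_of_isLittleO [CompleteSpace E]
    (hF_int : ∀ᶠ θ in 𝓝 θ₀, Integrable (F θ) μ) (hg_int : Integrable g μ)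
    (h : (fun θ => ∫ u, |firstOrderRemainder F g θ₀ θ u| ∂μ) =o[𝓝 θ₀] (fun θ => θ - θ₀))
    (s : Set α) :
    HasGradientAt (fun θ => ∫ u in s, F θ u ∂μ) (∫ u in s, g u ∂μ) θ₀ := by
  rw [hasGradientAt_iff_hasFDerivAt, hasFDerivAt_iff_isLittleO]
  refine (IsBigO.of_bound 1 ?_).trans_isLittleO h
  filter_upwards [hF_int] with θ hθ
  have hR := integrable_firstOrderRemainder hθ hF_int.self_of_nhds hg_int
  rw [InnerProductSpace.toDual_apply_apply, ← integral_firstOrderRemainder hθ.restrict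
    hF_int.self_of_nhds.restrict hg_int.restrict, one_mul,
    Real.norm_of_nonneg (integral_nonneg fun _ => abs_nonneg _)]
  calc ‖∫ u in s, firstOrderRemainder F g θ₀ θ u ∂μ‖
      ≤ ∫ u in s, ‖firstOrderRemainder F g θ₀ θ u‖ ∂μ := norm_integral_le_integral_norm _
    _ ≤ ∫ u, ‖firstOrderRemainder F g θ₀ θ u‖ ∂μ :=
        setIntegral_le_integral hR.norm (Eventually.of_forall fun _ => norm_nonneg _)
    _ = ∫ u, |firstOrderRemainder F g θ₀ θ u| ∂μ := by simp_rw [Real.norm_eq_abs]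

end

theorem hasGradientAt_param_cdf_general
    {k : ℕ} (Θ : Set (EuclideanSpace ℝ (Fin k)))
    (p : EuclideanSpace ℝ (Fin k) → ℝ → ℝ)
    (s : EuclideanSpace ℝ (Fin k) → ℝ → EuclideanSpace ℝ (Fin k))
    (θ₀ : EuclideanSpace ℝ (Fin k))
    -- `p θ` is a probability density for each `θ ∈ Θ`:
    (hp_nonneg : ∀ θ ∈ Θ, ∀ u : ℝ, 0 ≤ p θ u)
    (hp_one : ∀ θ ∈ Θ, ∫ u : ℝ, p θ u = 1)
    -- `θ ↦ p θ u` is continuously differentiable with gradient `p θ u • s θ u`: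
    (hgrad : ∀ u : ℝ, ∀ θ ∈ interior Θ, HasGradientAt (fun t => p t u) (p θ u • s θ u) θ)
    -- local uniform integrable boundedness of the score at `θ₀`:
    (ε : ℝ) (hε : 0 < ε) (hball : ball θ₀ ε ⊆ interior Θ)
    (hbdd : ∀ u : ℝ, BddAbove (Set.range fun θ : ball θ₀ ε => ‖s θ.1 u‖))
    (hfin : ∫⁻ u : ℝ,
        ENNReal.ofReal ((⨆ θ : ball θ₀ ε, ‖s θ.1 u‖) * p θ₀ u) < ⊤) :
    ∀ y : ℝ,
      HasGradientAt (fun θ => ∫ u in Set.Iic y, p θ u)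
        (∫ u in Set.Iic y, p θ₀ u • s θ₀ u) θ₀ := by
  set M : ℝ → ℝ := fun u => ⨆ θ : ball θ₀ ε, ‖s θ.1 u‖
  have hθ₀ : θ₀ ∈ ball θ₀ ε := mem_ball_self hε
  have hΘ : ∀ θ ∈ ball θ₀ ε, θ ∈ Θ := fun θ hθ => interior_subset (hball hθ)
  have hs_le : ∀ u, ∀ θ ∈ ball θ₀ ε, ‖s θ u‖ ≤ M u := fun u θ hθ =>
    le_ciSup (hbdd u) ⟨θ, hθ⟩
  have hp_int : ∀ᶠ θ in 𝓝 θ₀, Integrable (p θ) := by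
    filter_upwards [ball_mem_nhds θ₀ hε] with θ hθ
    exact integrable_of_integral_eq_one (hp_one θ (hΘ θ hθ))
  have hp_mass : ∀ᶠ θ in 𝓝 θ₀, ∫ u, p θ u = ∫ u, p θ₀ u := by
    filter_upwards [ball_mem_nhds θ₀ hε] with θ hθ
    rw [hp_one θ (hΘ θ hθ), hp_one θ₀ (hΘ θ₀ hθ₀)]
  have hgrad₀ : ∀ u, HasGradientAt (p · u) (p θ₀ u • s θ₀ u) θ₀ := fun u =>
    hgrad u θ₀ (hball hθ₀)
  have hgrad_int : Integrable (fun u => p θ₀ u • s θ₀ u) := by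
    refine ⟨aestronglyMeasurable_of_hasGradientAt
      (hp_int.mono fun θ hθ => hθ.aestronglyMeasurable) (ae_of_all _ hgrad₀), ?_⟩
    rw [hasFiniteIntegral_iff_norm]
    refine (lintegral_mono fun u => ENNReal.ofReal_le_ofReal ?_).trans_lt hfin
    rw [norm_smul, Real.norm_of_nonneg (hp_nonneg θ₀ (hΘ θ₀ hθ₀) u), mul_comm]
    gcongr
    exacts [hp_nonneg θ₀ (hΘ θ₀ hθ₀) u, hs_le u θ₀ hθ₀]
  have hlower : ∀ᶠ θ in 𝓝 θ₀, ∀ᵐ u, p θ₀ u - p θ u ≤ M u * p θ₀ u * ‖θ - θ₀‖ := by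
    filter_upwards [ball_mem_nhds θ₀ hε] with θ hθ
    exact ae_of_all _ fun u => sub_le_mul_norm_of_hasGradientAt_smul (convex_ball θ₀ ε)
      (fun θ' hθ' => hp_nonneg θ' (hΘ θ' hθ') u) (fun θ' hθ' => hgrad u θ' (hball hθ'))
      (hs_le u) hθ₀ hθ
  intro y
  exact hasGradientAt_setIntegral_of_isLittleO hp_int hgrad_int
    (isLittleO_integral_abs_firstOrderRemainder hp_int hp_mass (ae_of_all _ hgrad₀) hgrad_int
      hlower hfin.ne) (Set.Iic y)

/-- Leibniz rule for the parametric CDF: under local uniform integrable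
boundedness of the score, the gradient in `θ` at `θ₀` of the CDF `θ ↦ ∫_{-∞}^y p_θ(u) du`
is `∫_{-∞}^y s(θ₀)(u) p_{θ₀}(u) du = E_{θ₀}[s(θ₀)(Y) 1(Y ≤ y)]`.

The score `s(θ)(u) = ∇_θ log p_θ(u)` is encoded through the relation
`∇_θ p_θ(u) = p_θ(u) • s(θ)(u)`, and "continuously differentiable" through continuity of this
gradient in `θ`. -/
theorem hasGradientAt_param_cdf
    {k : ℕ} (Θ : Set (EuclideanSpace ℝ (Fin k)))
    (p : EuclideanSpace ℝ (Fin k) → ℝ → ℝ)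
    (s : EuclideanSpace ℝ (Fin k) → ℝ → EuclideanSpace ℝ (Fin k))
    (θ₀ : EuclideanSpace ℝ (Fin k)) (hθ₀ : θ₀ ∈ interior Θ)
    -- `p θ` is a probability density for each `θ ∈ Θ`:
    (hp_nonneg : ∀ θ ∈ Θ, ∀ u : ℝ, 0 ≤ p θ u)
    (hp_meas : ∀ θ ∈ Θ, Measurable (p θ))
    (hp_one : ∀ θ ∈ Θ, ∫ u : ℝ, p θ u = 1)
    -- `θ ↦ p θ u` is continuously differentiable with gradient `p θ u • s θ u`:
    (hgrad : ∀ u : ℝ, ∀ θ ∈ interior Θ, HasGradientAt (fun t => p t u) (p θ u • s θ u) θ)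
    (hgrad_cont : ∀ u : ℝ, ContinuousOn (fun θ => p θ u • s θ u) (interior Θ))
    -- local uniform integrable boundedness of the score at `θ₀`:
    (ε : ℝ) (hε : 0 < ε) (hball : ball θ₀ ε ⊆ interior Θ)
    (hbdd : ∀ u : ℝ, BddAbove (Set.range fun θ : ball θ₀ ε => ‖s θ.1 u‖))
    (hfin : ∫⁻ u : ℝ,
        ENNReal.ofReal ((⨆ θ : ball θ₀ ε, ‖s θ.1 u‖) * p θ₀ u) < ⊤) :
    ∀ y : ℝ,
      HasGradientAt (fun θ => ∫ u in Set.Iic y, p θ u)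
        (∫ u in Set.Iic y, p θ₀ u • s θ₀ u) θ₀ :=
  hasGradientAt_param_cdf_general Θ p s θ₀ hp_nonneg hp_one hgrad ε hε hball hbdd hfin
end
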